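/- arXiv:2410.01248 — 2 statements merged into one kernel-verified Lean document; each statement's English description precedes it below -/
import Mathlib

section
/- Let g be a Lie algebra over a field of characteristic zero, equipped with an increasing filtration W with W₋₁g an ideal and gr₀^W g = g/W₋₁g semisimple. Suppose h ⊆ g is an ideal with h ∩ W₋₁g = 0. Then there exists an ideal g' ⊆ g with g = h ⊕ g' as Lie algebras. -/
/-- let `g` be a Lie algebra over a field of characteristic zero with an
ideal `I` (playing the role of `W₋₁g`) such that `g ⧸ I` (playing the role of `gr₀^W g`)
is semisimple.  If `h` is an ideal of `g` with `h ⊓ I = ⊥`, then `h` admits a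
complementary ideal `g'`, i.e. `g = h ⊕ g'`. -/
theorem stmt_11 {k g : Type*} [Field k] [CharZero k] [LieRing g] [LieAlgebra k g]
    (I : LieIdeal k g) (hss : LieAlgebra.IsSemisimple k (g ⧸ I))
    (h : LieIdeal k g) (hint : h ⊓ I = ⊥) :
    ∃ g' : LieIdeal k g, IsCompl h g' := by
  haveI := hss
  let π : g →ₗ⁅k⁆ g ⧸ I :=
    { LieSubmodule.Quotient.mk' I with
      toFun := LieSubmodule.Quotient.mk
      map_lie' := fun {x y} => rfl }
  have hπsurj : Function.Surjective π := Quot.mk_surjective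
  have hπker : ∀ x, π x = 0 ↔ x ∈ I := fun x =>
    Submodule.Quotient.mk_eq_zero I.toSubmodule
  set hbar : LieIdeal k (g ⧸ I) := LieIdeal.map π h with hbar_def
  set Jbar : LieIdeal k (g ⧸ I) := hbarᶜ with Jbar_def
  have hcompl : IsCompl hbar Jbar := isCompl_compl
  refine ⟨LieIdeal.comap π Jbar, ?_, ?_⟩
  · rw [disjoint_iff, eq_bot_iff]
    intro x hx
    obtain ⟨hx1, hx2⟩ := hx
    have h1 : π x ∈ hbar := LieIdeal.mem_map hx1
    have h2 : π x ∈ Jbar := hx2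
    have hmem : π x ∈ hbar ⊓ Jbar := ⟨h1, h2⟩
    rw [hcompl.inf_eq_bot, LieSubmodule.mem_bot] at hmem
    have hxI : x ∈ I := (hπker x).mp hmem
    have hxhi : x ∈ h ⊓ I := ⟨hx1, hxI⟩
    rwa [hint, LieSubmodule.mem_bot] at hxhi
  · rw [codisjoint_iff, eq_top_iff]
    intro x _
    have hx : π x ∈ hbar ⊔ Jbar := by
      rw [hcompl.sup_eq_top]; exact LieSubmodule.mem_top _
    rw [LieSubmodule.mem_sup] at hx
    obtain ⟨a, ha, b, hb, hab⟩ := hx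
    obtain ⟨y, rfl⟩ := LieIdeal.mem_map_of_surjective hπsurj ha
    refine (LieSubmodule.mem_sup _ _ _).mpr ⟨(y : g), y.2, x - y, ?_, by abel⟩
    show π (x - (y : g)) ∈ Jbar
    have heq : π (x - (y : g)) = b := by rw [map_sub, ← hab]; abel
    rw [heq]; exact hb
end

section
/- Let X be an affine scheme over ℂ with an étale map q : X → 𝔸ⁿ, and let z₁,…,zₙ be the pullbacks of the coordinates with associated derivations ∂₁,…,∂ₙ dual to dz₁,…,dzₙ. Then for any regular function g on X, the formal Taylor expansion identity π₁*g − π₂*g = Σ_J (π₂*(∂_J g)/J!) (π₁*z − π₂*z)^J holds in the completion of O_{X×X} along the diagonal ideal I_Δ, where the sum is over multi-indices J with |J| ≥ 1. -/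
open TensorProduct Finset

noncomputable def multiDeriv {R : Type} [CommRing R] [Algebra ℂ R] {n : ℕ}
    (D : Fin n → Derivation ℂ R R) (J : Fin n → ℕ) : R → R :=
  (List.finRange n).foldr (fun i acc => (fun x => D i x)^[J i] ∘ acc) id

variable {R : Type} [CommRing R] [Algebra ℂ R]

lemma iterD_add (D : Derivation ℂ R R) (k : ℕ) (a b : R) :
    (fun x => D x)^[k] (a + b) = (fun x => D x)^[k] a + (fun x => D x)^[k] b := by
  induction k generalizing a b with
  | zero => simp
  | succ k ih => rw [Function.iterate_succ_apply, map_add]; exact ih _ _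

lemma iterD_smul (D : Derivation ℂ R R) (k : ℕ) (c : ℂ) (a : R) :
    (fun x => D x)^[k] (c • a) = c • (fun x => D x)^[k] a := by
  induction k generalizing a with
  | zero => simp
  | succ k ih =>
    rw [Function.iterate_succ_apply, Derivation.map_smul]; exact ih _

lemma iterD_zero (D : Derivation ℂ R R) (k : ℕ) :
    (fun x => D x)^[k] (0:R) = 0 := by
  induction k with
  | zero => simp
  | succ k ih => rw [Function.iterate_succ_apply, map_zero]; exact ih

lemma iterD_sum (D : Derivation ℂ R R) (k : ℕ) {ι : Type*} (s : Finset ι) (f : ι → R) :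
    (fun x => D x)^[k] (∑ i ∈ s, f i) = ∑ i ∈ s, (fun x => D x)^[k] (f i) := by
  classical
  induction s using Finset.induction with
  | empty => simp [iterD_zero]
  | insert _ _ h ih => rw [Finset.sum_insert h, iterD_add, ih, Finset.sum_insert h]

lemma iterD_leibniz (D : Derivation ℂ R R) (k : ℕ) (a b : R) :
    (fun x => D x)^[k] (a * b)
      = ∑ j ∈ range (k+1), (k.choose j) • ((fun x => D x)^[j] a * (fun x => D x)^[k-j] b) := by
  induction k generalizing a b with
  | zero => simp
  | succ k ih =>
    have hl : D (a * b) = D a * b + a * D b := by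
      rw [Derivation.leibniz]; rw [smul_eq_mul, smul_eq_mul]; ring
    rw [Function.iterate_succ_apply]
    show (fun x => D x)^[k] (D (a*b)) = _
    rw [hl, iterD_add, ih, ih]
    have hA : ∑ j ∈ range (k+1), (k.choose j) • ((fun x => D x)^[j] (D a) * (fun x => D x)^[k-j] b)
        = ∑ j ∈ range (k+1), (k.choose j) • ((fun x => D x)^[j+1] a * (fun x => D x)^[k-j] b) := by
      refine Finset.sum_congr rfl fun j hj => ?_
      rw [Function.iterate_succ_apply]
    have hB : ∑ j ∈ range (k+1), (k.choose j) • ((fun x => D x)^[j] a * (fun x => D x)^[k-j] (D b))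
        = ∑ j ∈ range (k+1), (k.choose j) • ((fun x => D x)^[j] a * (fun x => D x)^[k+1-j] b) := by
      refine Finset.sum_congr rfl fun j hj => ?_
      rw [Finset.mem_range] at hj
      have : k + 1 - j = (k - j) + 1 := by omega
      rw [this, Function.iterate_succ_apply]
    rw [hA, hB]
    rw [Finset.sum_range_succ' (fun j => ((k+1).choose j) • ((fun x => D x)^[j] a * (fun x => D x)^[k+1-j] b))]
    have hsplit : ∀ j ∈ range (k+1),
        ((k+1).choose (j+1)) • ((fun x => D x)^[j+1] a * (fun x => D x)^[k+1-(j+1)] b)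
        = (k.choose j) • ((fun x => D x)^[j+1] a * (fun x => D x)^[k-j] b)
          + (k.choose (j+1)) • ((fun x => D x)^[j+1] a * (fun x => D x)^[k+1-(j+1)] b) := by
      intro j hj
      have h1 : k + 1 - (j+1) = k - j := by omega
      rw [h1, Nat.choose_succ_succ, add_smul]
    rw [Finset.sum_congr rfl hsplit, Finset.sum_add_distrib]
    have hB2 : ∑ j ∈ range (k+1), (k.choose j) • ((fun x => D x)^[j] a * (fun x => D x)^[k+1-j] b)
        = (∑ j ∈ range (k+1), (k.choose (j+1)) • ((fun x => D x)^[j+1] a * (fun x => D x)^[k+1-(j+1)] b))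
          + (k.choose 0) • ((fun x => D x)^[0] a * (fun x => D x)^[k+1-0] b) := by
      have h := Finset.sum_range_succ' (fun j => (k.choose j) • ((fun x => D x)^[j] a * (fun x => D x)^[k+1-j] b)) (k+1)
      rw [Finset.sum_range_succ] at h
      simpa [Nat.choose_succ_self] using h
    rw [hB2]
    simp only [Nat.choose_zero_right, one_smul, Function.iterate_zero, id_eq, Nat.sub_zero]
    ring

lemma foldr_comp {α : Type*} (f : α → R → R) (l : List α) (h : R → R) :
    l.foldr (fun i acc => f i ∘ acc) h = (l.foldr (fun i acc => f i ∘ acc) id) ∘ h := by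
  induction l with
  | nil => rfl
  | cons a l ih => rw [List.foldr_cons, List.foldr_cons, ih]; rfl

lemma multiDeriv_last {n : ℕ} (D : Fin (n+1) → Derivation ℂ R R) (J : Fin (n+1) → ℕ) :
    multiDeriv D J
      = multiDeriv (fun i => D i.castSucc) (fun i => J i.castSucc)
          ∘ (fun x => D (Fin.last n) x)^[J (Fin.last n)] := by
  unfold multiDeriv
  rw [List.finRange_succ_last, List.foldr_append, List.foldr_cons, List.foldr_nil,
    List.foldr_map, foldr_comp]
  rfl

lemma multiDeriv_zero {n : ℕ} (D : Fin n → Derivation ℂ R R) :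
    multiDeriv D (fun _ => 0) = id := by
  unfold multiDeriv
  induction List.finRange n with
  | nil => rfl
  | cons a l ih => rw [List.foldr_cons, ih]; rfl

noncomputable def Phi (m : ℕ) : (n : ℕ) → (Fin n → Derivation ℂ R R) → (Fin n → R ⊗[ℂ] R) → R → R ⊗[ℂ] R
  | 0, _, _, g => 1 ⊗ₜ g
  | (n+1), D, T, g => ∑ k ∈ range (m+1), ((k.factorial : ℂ))⁻¹ •
      (T (Fin.last n) ^ k * Phi m n (fun i => D i.castSucc) (fun i => T i.castSucc) ((fun x => D (Fin.last n) x)^[k] g))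

lemma Phi_add (m n : ℕ) (D : Fin n → Derivation ℂ R R) (T : Fin n → R ⊗[ℂ] R) (a b : R) :
    Phi m n D T (a + b) = Phi m n D T a + Phi m n D T b := by
  induction n generalizing a b with
  | zero => simp [Phi, TensorProduct.tmul_add]
  | succ n ih =>
    simp only [Phi, iterD_add, ih, mul_add, smul_add, Finset.sum_add_distrib]

lemma Phi_smul (m n : ℕ) (D : Fin n → Derivation ℂ R R) (T : Fin n → R ⊗[ℂ] R) (c : ℂ) (a : R) :
    Phi m n D T (c • a) = c • Phi m n D T a := by
  induction n generalizing a with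
  | zero => simp [Phi, TensorProduct.tmul_smul]
  | succ n ih =>
    simp only [Phi, iterD_smul, ih, Finset.smul_sum, smul_comm c, mul_smul_comm]

lemma Phi_zero (m n : ℕ) (D : Fin n → Derivation ℂ R R) (T : Fin n → R ⊗[ℂ] R) :
    Phi m n D T 0 = 0 := by
  have := Phi_add m n D T 0 0
  simpa using this

lemma Phi_sum (m n : ℕ) (D : Fin n → Derivation ℂ R R) (T : Fin n → R ⊗[ℂ] R)
    {ι : Type*} (s : Finset ι) (f : ι → R) :
    Phi m n D T (∑ i ∈ s, f i) = ∑ i ∈ s, Phi m n D T (f i) := by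
  classical
  induction s using Finset.induction with
  | empty => simp [Phi_zero]
  | insert _ _ h ih => rw [Finset.sum_insert h, Phi_add, ih, Finset.sum_insert h]

lemma Phi_const (m n : ℕ) (D : Fin n → Derivation ℂ R R) (T : Fin n → R ⊗[ℂ] R)
    (c : R) (hc : ∀ i, D i c = 0) :
    Phi m n D T c = 1 ⊗ₜ c := by
  induction n generalizing c with
  | zero => rfl
  | succ n ih =>
    rw [Phi]
    rw [Finset.sum_eq_single 0]
    · simp only [pow_zero, one_mul, Nat.factorial_zero, Nat.cast_one, inv_one, one_smul,
        Function.iterate_zero, id_eq]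
      exact ih _ _ c (fun i => hc i.castSucc)
    · intro k _ hk
      obtain ⟨k, rfl⟩ := Nat.exists_eq_succ_of_ne_zero hk
      have : (fun x => D (Fin.last n) x)^[k+1] c = 0 := by
        rw [Function.iterate_succ_apply]
        show (fun x => D (Fin.last n) x)^[k] (D (Fin.last n) c) = 0
        rw [hc (Fin.last n), iterD_zero]
      rw [this, Phi_zero, mul_zero, smul_zero]
    · intro h; exact absurd (Finset.mem_range.2 (Nat.succ_pos m)) h

lemma Phi_deg1 (m n : ℕ) (hm : 1 ≤ m) (D : Fin n → Derivation ℂ R R) (T : Fin n → R ⊗[ℂ] R)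
    (b : R) (hb : ∀ i j, D i (D j b) = 0) :
    Phi m n D T b = 1 ⊗ₜ b + ∑ i, T i * (1 ⊗ₜ (D i b)) := by
  induction n generalizing b with
  | zero => simp [Phi]
  | succ n ih =>
    rw [Phi]
    have key : ∀ k ∈ range (m+1), ((k.factorial : ℂ))⁻¹ •
        (T (Fin.last n) ^ k * Phi m n (fun i => D i.castSucc) (fun i => T i.castSucc) ((fun x => D (Fin.last n) x)^[k] b))
        = (if k = 0 then (1 ⊗ₜ b + ∑ i : Fin n, T i.castSucc * (1 ⊗ₜ (D i.castSucc b))) else 0)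
          + (if k = 1 then T (Fin.last n) * (1 ⊗ₜ (D (Fin.last n) b)) else 0) := by
      intro k _
      match k with
      | 0 =>
        simp only [if_pos rfl, if_neg (by omega : (0:ℕ) ≠ 1), pow_zero, one_mul,
          Nat.factorial_zero, Nat.cast_one, inv_one, one_smul, Function.iterate_zero, id_eq,
          add_zero]
        exact ih _ _ b (fun i j => hb i.castSucc j.castSucc)
      | 1 =>
        rw [if_neg one_ne_zero, if_pos rfl, zero_add]
        simp only [pow_one, Nat.factorial_one, Nat.cast_one, inv_one, one_smul,
          Function.iterate_one]
        rw [Phi_const m n _ _ _ (fun i => hb i.castSucc (Fin.last n))]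
      | (k+2) =>
        have h2 : (fun x => D (Fin.last n) x)^[k+2] b = 0 := by
          rw [Function.iterate_succ_apply, Function.iterate_succ_apply]
          show (fun x => D (Fin.last n) x)^[k] (D (Fin.last n) (D (Fin.last n) b)) = 0
          rw [hb (Fin.last n) (Fin.last n), iterD_zero]
        simp [h2, Phi_zero, if_neg (by omega : k+2 ≠ 0), if_neg (by omega : k+2 ≠ 1)]
    rw [Finset.sum_congr rfl key, Finset.sum_add_distrib, Finset.sum_ite_eq' (range (m+1)) 0,
      Finset.sum_ite_eq' (range (m+1)) 1, if_pos (by simp), if_pos (by simp; omega),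
      Fin.sum_univ_castSucc]
    ring


lemma Phi_box (m : ℕ) : ∀ (n : ℕ) (D : Fin n → Derivation ℂ R R) (T : Fin n → R ⊗[ℂ] R) (g : R),
    Phi m n D T g = ∑ J : Fin n → Fin (m+1),
      (((∏ i, Nat.factorial (J i) : ℕ) : ℂ))⁻¹ •
        ((1 ⊗ₜ[ℂ] multiDeriv D (fun i => (J i : ℕ)) g) * ∏ i, T i ^ (J i : ℕ))
  | 0, D, T, g => by
    rw [show Phi m 0 D T g = 1 ⊗ₜ[ℂ] g from rfl]
    have huniv : (Finset.univ : Finset (Fin 0 → Fin (m+1))) = {fun i => i.elim0} := by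
      apply Finset.eq_singleton_iff_unique_mem.mpr
      exact ⟨Finset.mem_univ _, fun J _ => funext fun i => i.elim0⟩
    rw [huniv, Finset.sum_singleton]
    simp [multiDeriv]
  | (n+1), D, T, g => by
    rw [Phi, ← Fin.sum_univ_eq_sum_range]
    have step : ∀ k : Fin (m+1), (((k:ℕ).factorial : ℂ))⁻¹ •
        (T (Fin.last n) ^ (k:ℕ) * Phi m n (fun i => D i.castSucc) (fun i => T i.castSucc)
          ((fun x => D (Fin.last n) x)^[(k:ℕ)] g))
        = ∑ J : Fin n → Fin (m+1),
            (((∏ i : Fin (n+1), Nat.factorial ((Fin.snoc J k : Fin (n+1) → Fin (m+1)) i) : ℕ) : ℂ))⁻¹ •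
              ((1 ⊗ₜ[ℂ] multiDeriv D (fun i => ((Fin.snoc J k : Fin (n+1) → Fin (m+1)) i : ℕ)) g)
                * ∏ i : Fin (n+1), T i ^ ((Fin.snoc J k : Fin (n+1) → Fin (m+1)) i : ℕ)) := by
      intro k
      rw [Phi_box m n (fun i => D i.castSucc) (fun i => T i.castSucc)
        ((fun x => D (Fin.last n) x)^[(k:ℕ)] g)]
      rw [Finset.mul_sum, Finset.smul_sum]
      refine Finset.sum_congr rfl fun J _ => ?_
      have hmd : multiDeriv D (fun i => ((Fin.snoc J k : Fin (n+1) → Fin (m+1)) i : ℕ)) g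
          = multiDeriv (fun i => D i.castSucc) (fun i => (J i : ℕ))
              ((fun x => D (Fin.last n) x)^[(k:ℕ)] g) := by
        rw [multiDeriv_last]
        simp only [Fin.snoc_castSucc, Fin.snoc_last, Function.comp_apply]
      have hprod : ∏ i : Fin (n+1), T i ^ ((Fin.snoc J k : Fin (n+1) → Fin (m+1)) i : ℕ)
          = (∏ i : Fin n, T i.castSucc ^ (J i : ℕ)) * T (Fin.last n) ^ (k:ℕ) := by
        rw [Fin.prod_univ_castSucc]
        simp only [Fin.snoc_castSucc, Fin.snoc_last]
      have hfact : (∏ i : Fin (n+1), Nat.factorial ((Fin.snoc J k : Fin (n+1) → Fin (m+1)) i) : ℕ)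
          = (∏ i : Fin n, Nat.factorial (J i)) * (k:ℕ).factorial := by
        rw [Fin.prod_univ_castSucc]
        simp only [Fin.snoc_castSucc, Fin.snoc_last]
      rw [hmd, hprod, hfact, Nat.cast_mul, mul_inv, mul_smul_comm, smul_smul]
      congr 1
      · exact mul_comm _ _
      · ring
    rw [Finset.sum_congr rfl (fun k _ => step k)]
    conv_rhs => rw [← Equiv.sum_comp (Fin.snocEquiv fun _ => Fin (m+1))]
    rw [Fintype.sum_prod_type]
    rfl

lemma smul_mem_ideal {I : Ideal (R ⊗[ℂ] R)} (c : ℂ) {x : R ⊗[ℂ] R} (hx : x ∈ I) : c • x ∈ I := by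
  rw [Algebra.smul_def]; exact I.mul_mem_left _ hx

lemma Phi_nsmul (m n : ℕ) (D : Fin n → Derivation ℂ R R) (T : Fin n → R ⊗[ℂ] R) (c : ℕ) (a : R) :
    Phi m n D T (c • a) = c • Phi m n D T a := by
  induction c with
  | zero => simp [Phi_zero]
  | succ c ih => rw [succ_nsmul, Phi_add, ih, succ_nsmul]

lemma choose_factorial_inv {j k : ℕ} (h : j ≤ k) :
    ((k.factorial:ℂ))⁻¹ * (k.choose j : ℂ) = ((j.factorial:ℂ))⁻¹ * (((k-j).factorial:ℂ))⁻¹ := by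
  have hc := Nat.choose_mul_factorial_mul_factorial h
  have h1 : (k.factorial : ℂ) ≠ 0 := Nat.cast_ne_zero.2 k.factorial_ne_zero
  have h2 : (j.factorial : ℂ) ≠ 0 := Nat.cast_ne_zero.2 j.factorial_ne_zero
  have h3 : (((k-j).factorial : ℂ)) ≠ 0 := Nat.cast_ne_zero.2 (k-j).factorial_ne_zero
  field_simp
  rw [← hc]
  push_cast
  ring

lemma truncation (I : Ideal (R ⊗[ℂ] R)) (t : R ⊗[ℂ] R) (ht : t ∈ I) (m : ℕ) (X Y : ℕ → R ⊗[ℂ] R) :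
    (∑ k ∈ range (m+1), ∑ j ∈ range (k+1),
        (((j.factorial:ℂ))⁻¹ * (((k-j).factorial:ℂ))⁻¹) • (t^k * (X j * Y (k-j))))
      - (∑ j ∈ range (m+1), ((j.factorial:ℂ))⁻¹ • (t^j * X j))
          * (∑ l ∈ range (m+1), ((l.factorial:ℂ))⁻¹ • (t^l * Y l)) ∈ I^(m+1) := by
  have hB : (∑ k ∈ range (m+1), ∑ j ∈ range (k+1),
        (((j.factorial:ℂ))⁻¹ * (((k-j).factorial:ℂ))⁻¹) • (t^k * (X j * Y (k-j))))
      = ∑ p ∈ (range (m+1) ×ˢ range (m+1)).filter (fun p => p.1 + p.2 ≤ m),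
          (((p.1.factorial:ℂ))⁻¹ * ((p.2.factorial:ℂ))⁻¹) • (t^(p.1+p.2) * (X p.1 * Y p.2)) := by
    rw [Finset.sum_sigma' (range (m+1)) (fun k => range (k+1))]
    refine Finset.sum_nbij' (fun x => (x.2, x.1 - x.2)) (fun p => ⟨p.1 + p.2, p.1⟩) ?_ ?_ ?_ ?_ ?_
    · intro x hx
      simp only [Finset.mem_sigma, Finset.mem_range] at hx
      simp only [Finset.mem_filter, Finset.mem_product, Finset.mem_range]
      omega
    · intro p hp
      simp only [Finset.mem_filter, Finset.mem_product, Finset.mem_range] at hp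
      simp only [Finset.mem_sigma, Finset.mem_range]
      omega
    · intro x hx
      simp only [Finset.mem_sigma, Finset.mem_range] at hx
      ext <;> simp <;> omega
    · intro p hp
      simp
    · intro x hx
      simp only [Finset.mem_sigma, Finset.mem_range] at hx
      have : x.2 + (x.1 - x.2) = x.1 := by omega
      rw [this]
  have hC : (∑ j ∈ range (m+1), ((j.factorial:ℂ))⁻¹ • (t^j * X j))
          * (∑ l ∈ range (m+1), ((l.factorial:ℂ))⁻¹ • (t^l * Y l))
      = ∑ p ∈ range (m+1) ×ˢ range (m+1),
          (((p.1.factorial:ℂ))⁻¹ * ((p.2.factorial:ℂ))⁻¹) • (t^(p.1+p.2) * (X p.1 * Y p.2)) := by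
    rw [Finset.sum_mul_sum, Finset.sum_product]
    refine Finset.sum_congr rfl fun j _ => Finset.sum_congr rfl fun l _ => ?_
    rw [smul_mul_smul_comm, pow_add]
    congr 1
    ring
  rw [hB, hC]
  rw [← Finset.sum_filter_add_sum_filter_not (range (m+1) ×ˢ range (m+1))
    (fun p => p.1 + p.2 ≤ m), sub_add_cancel_left, neg_mem_iff]
  refine Ideal.sum_mem _ fun p hp => ?_
  have hgt : m + 1 ≤ p.1 + p.2 := by
    simp only [Finset.mem_filter, Finset.mem_product, Finset.mem_range] at hp
    omega
  refine smul_mem_ideal _ ?_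
  exact Ideal.mul_mem_right _ _ (Ideal.pow_le_pow_right hgt (Ideal.pow_mem_pow ht _))

lemma Phi_mul (m : ℕ) (I : Ideal (R ⊗[ℂ] R)) :
    ∀ (n : ℕ) (D : Fin n → Derivation ℂ R R) (T : Fin n → R ⊗[ℂ] R),
    (∀ i, T i ∈ I) → ∀ a b : R,
    Phi m n D T (a * b) - Phi m n D T a * Phi m n D T b ∈ I ^ (m+1)
  | 0, D, T, hT, a, b => by
    rw [show Phi m 0 D T (a*b) = 1 ⊗ₜ[ℂ] (a*b) from rfl, show Phi m 0 D T a = 1 ⊗ₜ[ℂ] a from rfl,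
      show Phi m 0 D T b = 1 ⊗ₜ[ℂ] b from rfl, Algebra.TensorProduct.tmul_mul_tmul, one_mul,
      sub_self]
    exact zero_mem _
  | (n+1), D, T, hT, a, b => by
    have hA : Phi m (n+1) D T (a*b)
        - (∑ k ∈ range (m+1), ∑ j ∈ range (k+1),
            (((j.factorial:ℂ))⁻¹ * (((k-j).factorial:ℂ))⁻¹) •
              (T (Fin.last n) ^ k
                * (Phi m n (fun i => D i.castSucc) (fun i => T i.castSucc)
                      ((fun x => D (Fin.last n) x)^[j] a)
                  * Phi m n (fun i => D i.castSucc) (fun i => T i.castSucc)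
                      ((fun x => D (Fin.last n) x)^[k-j] b)))) ∈ I ^ (m+1) := by
      rw [Phi]
      have expand : ∀ k ∈ range (m+1), ((k.factorial:ℂ))⁻¹ •
          (T (Fin.last n) ^ k * Phi m n (fun i => D i.castSucc) (fun i => T i.castSucc)
            ((fun x => D (Fin.last n) x)^[k] (a*b)))
          = ∑ j ∈ range (k+1), (((j.factorial:ℂ))⁻¹ * (((k-j).factorial:ℂ))⁻¹) •
              (T (Fin.last n) ^ k * Phi m n (fun i => D i.castSucc) (fun i => T i.castSucc)
                ((fun x => D (Fin.last n) x)^[j] a * (fun x => D (Fin.last n) x)^[k-j] b)) := by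
        intro k _
        rw [iterD_leibniz, Phi_sum, Finset.mul_sum, Finset.smul_sum]
        refine Finset.sum_congr rfl fun j hj => ?_
        rw [Phi_nsmul, ← Nat.cast_smul_eq_nsmul ℂ, mul_smul_comm, smul_smul,
          ← choose_factorial_inv (by rw [Finset.mem_range] at hj; omega)]
      rw [Finset.sum_congr rfl expand, ← Finset.sum_sub_distrib]
      refine Ideal.sum_mem _ fun k hk => ?_
      rw [← Finset.sum_sub_distrib]
      refine Ideal.sum_mem _ fun j hj => ?_
      rw [← smul_sub, ← mul_sub]
      exact smul_mem_ideal _ (Ideal.mul_mem_left _ _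
        (Phi_mul m I n _ _ (fun i => hT i.castSucc) _ _))
    have htr := truncation I (T (Fin.last n)) (hT (Fin.last n)) m
      (fun j => Phi m n (fun i => D i.castSucc) (fun i => T i.castSucc)
        ((fun x => D (Fin.last n) x)^[j] a))
      (fun l => Phi m n (fun i => D i.castSucc) (fun i => T i.castSucc)
        ((fun x => D (Fin.last n) x)^[l] b))
    have h2 := add_mem hA htr
    rw [sub_add_sub_cancel] at h2
    exact h2

lemma Phi_sub_tmul (m : ℕ) (I : Ideal (R ⊗[ℂ] R)) :
    ∀ (n : ℕ) (D : Fin n → Derivation ℂ R R) (T : Fin n → R ⊗[ℂ] R),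
    (∀ i, T i ∈ I) → ∀ g : R, Phi m n D T g - 1 ⊗ₜ[ℂ] g ∈ I
  | 0, D, T, hT, g => by
    rw [show Phi m 0 D T g = 1 ⊗ₜ[ℂ] g from rfl, sub_self]; exact zero_mem _
  | (n+1), D, T, hT, g => by
    rw [Phi, ← Finset.sum_erase_add (range (m+1)) _ (Finset.mem_range.2 (Nat.succ_pos m))]
    simp only [pow_zero, one_mul, Nat.factorial_zero, Nat.cast_one, inv_one, one_smul,
      Function.iterate_zero, id_eq]
    rw [add_sub_assoc]
    refine Ideal.add_mem _ (Ideal.sum_mem _ fun k hk => ?_)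
      (Phi_sub_tmul m I n _ _ (fun i => hT i.castSucc) g)
    rw [Finset.mem_erase] at hk
    refine smul_mem_ideal _ (Ideal.mul_mem_right _ _ ?_)
    have h1 : (1:ℕ) ≤ k := Nat.one_le_iff_ne_zero.2 hk.1
    have := Ideal.pow_le_pow_right h1 (Ideal.pow_mem_pow (hT (Fin.last n)) k)
    rwa [pow_one] at this

lemma prod_pow_mem_pow {S : Type*} [CommRing S] (I : Ideal S) {ι : Type*} (s : Finset ι)
    (x : ι → S) (hx : ∀ i ∈ s, x i ∈ I) (J : ι → ℕ) :
    (∏ i ∈ s, x i ^ J i) ∈ I ^ (∑ i ∈ s, J i) := by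
  classical
  induction s using Finset.induction with
  | empty => simp [Ideal.one_eq_top]
  | @insert a s ha ih =>
    rw [Finset.prod_insert ha, Finset.sum_insert ha, pow_add]
    exact Ideal.mul_mem_mul (Ideal.pow_mem_pow (hx a (Finset.mem_insert_self a s)) _)
      (ih fun i hi => hx i (Finset.mem_insert_of_mem hi))

lemma taylor_key (n : ℕ) (R' : Type) [CommRing R'] [Algebra ℂ R']
    [Algebra (MvPolynomial (Fin n) ℂ) R'] [IsScalarTower ℂ (MvPolynomial (Fin n) ℂ) R']
    [Algebra.Etale (MvPolynomial (Fin n) ℂ) R']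
    (z : Fin n → R') (hz : ∀ i, z i = algebraMap (MvPolynomial (Fin n) ℂ) R' (MvPolynomial.X i))
    (D : Fin n → Derivation ℂ R' R')
    (hD : ∀ i j, D i (z j) = if i = j then 1 else 0)
    (m : ℕ) (hm : 1 ≤ m) :
    ∀ g : R', (g ⊗ₜ[ℂ] 1)
      - Phi m n D (fun i => z i ⊗ₜ[ℂ] 1 - 1 ⊗ₜ[ℂ] z i) g
      ∈ (RingHom.ker (Algebra.TensorProduct.lmul' ℂ : R' ⊗[ℂ] R' →ₐ[ℂ] R')) ^ (m + 1) := by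
  classical
  set P := MvPolynomial (Fin n) ℂ with hP
  set I : Ideal (R' ⊗[ℂ] R') :=
    RingHom.ker (Algebra.TensorProduct.lmul' ℂ : R' ⊗[ℂ] R' →ₐ[ℂ] R') with hI
  set T : Fin n → R' ⊗[ℂ] R' := fun i => z i ⊗ₜ[ℂ] 1 - 1 ⊗ₜ[ℂ] z i with hT
  have hTI : ∀ i, T i ∈ I := by
    intro i
    have : (Algebra.TensorProduct.lmul' ℂ : R' ⊗[ℂ] R' →ₐ[ℂ] R') (T i) = 0 := by
      rw [hT]
      simp only [map_sub]
      rw [Algebra.TensorProduct.lmul'_apply_tmul, Algebra.TensorProduct.lmul'_apply_tmul]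
      ring
    exact this
  -- quotient setup
  set K : Ideal (R' ⊗[ℂ] R') := I ^ (m+1) with hK
  set mkq : R' ⊗[ℂ] R' →+* (R' ⊗[ℂ] R') ⧸ K := Ideal.Quotient.mk K with hmk
  -- the Taylor map as a ℂ-algebra morphism to the quotient
  have hone : Phi m n D T 1 = 1 ⊗ₜ[ℂ] 1 :=
    Phi_const m n D T 1 (fun i => Derivation.map_one_eq_zero _)
  -- value on z i
  have hzval : ∀ i, Phi m n D T (z i) = z i ⊗ₜ[ℂ] 1 := by
    intro i
    rw [Phi_deg1 m n hm D T (z i) (fun a b => by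
      rw [hD b i]
      split <;> simp [Derivation.map_one_eq_zero])]
    have : ∀ j, T j * (1 ⊗ₜ[ℂ] (D j (z i))) = if j = i then T i else 0 := by
      intro j
      rw [hD j i]
      split
      · rename_i h; subst h; rw [← Algebra.TensorProduct.one_def, mul_one]
      · simp
    rw [Finset.sum_congr rfl (fun j _ => this j), Finset.sum_ite_eq' Finset.univ i
      (fun _ => T i), if_pos (Finset.mem_univ i), hT]
    ring
  -- commutation with the polynomial algebra
  have hcomm : ∀ p : P, mkq (Phi m n D T (algebraMap P R' p))
      = mkq ((algebraMap P R' p) ⊗ₜ[ℂ] 1) := by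
    intro p
    induction p using MvPolynomial.induction_on with
    | C c =>
      have h1 : algebraMap P R' (MvPolynomial.C c) = algebraMap ℂ R' c := by
        rw [← MvPolynomial.algebraMap_eq, ← IsScalarTower.algebraMap_apply]
      rw [h1, Phi_const m n D T _ (fun i => Derivation.map_algebraMap _ _)]
      congr 1
      rw [Algebra.algebraMap_eq_smul_one, ← smul_tmul]
    | add p q hp hq =>
      simp only [map_add, Phi_add, TensorProduct.add_tmul]
      rw [hp, hq]
    | mul_X p i hp =>
      simp only [map_mul]
      rw [← hz i]
      have h2 : mkq (Phi m n D T (algebraMap P R' p * z i))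
          = mkq (Phi m n D T (algebraMap P R' p) * Phi m n D T (z i)) := by
        rw [Ideal.Quotient.eq]
        exact Phi_mul m I n D T hTI _ _
      rw [h2, map_mul, hp, hzval i, ← map_mul, Algebra.TensorProduct.tmul_mul_tmul, one_mul]
  have hmul : ∀ a b : R', mkq (Phi m n D T (a*b)) = mkq (Phi m n D T a) * mkq (Phi m n D T b) := by
    intro a b
    rw [← map_mul, Ideal.Quotient.eq]
    exact Phi_mul m I n D T hTI a b
  let f₂ : R' →ₐ[P] (R' ⊗[ℂ] R') ⧸ K :=
  { toFun := fun a => mkq (Phi m n D T a)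
    map_one' := by
      show mkq (Phi m n D T 1) = 1
      rw [hone, ← Algebra.TensorProduct.one_def]; exact map_one mkq
    map_mul' := hmul
    map_zero' := by
      show mkq (Phi m n D T 0) = 0
      rw [Phi_zero]; exact map_zero mkq
    map_add' := fun a b => by
      show mkq (Phi m n D T (a+b)) = mkq (Phi m n D T a) + mkq (Phi m n D T b)
      rw [Phi_add, map_add]
    commutes' := fun p => by
      show mkq (Phi m n D T (algebraMap P R' p)) = _
      rw [hcomm p]; rfl }
  let f₁ : R' →ₐ[P] (R' ⊗[ℂ] R') ⧸ K :=
    (Ideal.Quotient.mkₐ P K).comp (Algebra.TensorProduct.includeLeft (S := P))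
  have hnil : IsNilpotent (I.map mkq) := by
    refine ⟨m+1, ?_⟩
    rw [← Ideal.map_pow, ← hK, Ideal.zero_eq_bot, hmk]
    exact Ideal.map_quotient_self K
  have hext : f₁ = f₂ := by
    refine Algebra.FormallyUnramified.ext (I.map mkq) hnil (fun x => ?_)
    rw [Ideal.Quotient.eq]
    have hx : (x ⊗ₜ[ℂ] 1 : R' ⊗[ℂ] R') - Phi m n D T x ∈ I := by
      have h1 : (x ⊗ₜ[ℂ] 1 : R' ⊗[ℂ] R') - 1 ⊗ₜ[ℂ] x ∈ I := by
        have : (Algebra.TensorProduct.lmul' ℂ : R' ⊗[ℂ] R' →ₐ[ℂ] R')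
            ((x ⊗ₜ[ℂ] 1 : R' ⊗[ℂ] R') - 1 ⊗ₜ[ℂ] x) = 0 := by
          simp only [map_sub]
          rw [Algebra.TensorProduct.lmul'_apply_tmul, Algebra.TensorProduct.lmul'_apply_tmul]
          ring
        exact this
      have h2 := Phi_sub_tmul m I n D T hTI x
      have h3 := sub_mem h1 h2
      rwa [sub_sub_sub_cancel_right] at h3
    have heq : f₁ x - f₂ x = mkq ((x ⊗ₜ[ℂ] 1) - Phi m n D T x) := by
      rw [map_sub]; rfl
    rw [heq]
    exact Ideal.mem_map_of_mem _ hx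
  intro g
  have hg : f₁ g = f₂ g := by rw [hext]
  have hg' : mkq (g ⊗ₜ[ℂ] 1) = mkq (Phi m n D T g) := hg
  exact Ideal.Quotient.eq.mp hg'


/-- universal Taylor expansion.  Let `X = Spec R` be affine over `ℂ` with
an étale map `q : X → 𝔸ⁿ`, `zᵢ` the coordinate pullbacks, and `∂ᵢ` the dual
derivations.  Then for every `g ∈ R` and every `m`, the difference between
`π₁*g − π₂*g` and the Taylor polynomial `Σ_{1 ≤ |J| ≤ m} (∂_J g ⊗ 1ᵒᵖ-style term)/J!`
lies in `I_Δ^{m+1}`, where `I_Δ` is the kernel of the multiplication map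
`R ⊗ R → R`; this is the identity
`π₁*g − π₂*g = Σ_{|J| ≥ 1} (π₂*(∂_J g)/J!)(π₁*z − π₂*z)^J` in the `I_Δ`-adic
completion `lim R⊗R/I_Δ^k`. -/
theorem stmt_17 (n : ℕ) (R : Type) [CommRing R] [Algebra ℂ R]
    [Algebra (MvPolynomial (Fin n) ℂ) R] [IsScalarTower ℂ (MvPolynomial (Fin n) ℂ) R]
    [Algebra.Etale (MvPolynomial (Fin n) ℂ) R]
    (z : Fin n → R) (hz : ∀ i, z i = algebraMap (MvPolynomial (Fin n) ℂ) R (MvPolynomial.X i))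
    (D : Fin n → Derivation ℂ R R)
    (hD : ∀ i j, D i (z j) = if i = j then 1 else 0)
    (g : R) (m : ℕ) :
    (Algebra.TensorProduct.includeLeft : R →ₐ[ℂ] R ⊗[ℂ] R) g
      - (Algebra.TensorProduct.includeRight : R →ₐ[ℂ] R ⊗[ℂ] R) g
      - ∑ J ∈ Finset.univ.filter
          (fun J : Fin n → Fin (m + 1) => 1 ≤ ∑ i, (J i : ℕ) ∧ ∑ i, (J i : ℕ) ≤ m),
          (((∏ i, Nat.factorial (J i) : ℕ) : ℂ))⁻¹ •
            ((Algebra.TensorProduct.includeRight : R →ₐ[ℂ] R ⊗[ℂ] R)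
                (multiDeriv D (fun i => (J i : ℕ)) g) *
              ∏ i, ((Algebra.TensorProduct.includeLeft : R →ₐ[ℂ] R ⊗[ℂ] R) (z i)
                - (Algebra.TensorProduct.includeRight : R →ₐ[ℂ] R ⊗[ℂ] R) (z i)) ^ (J i : ℕ))
      ∈ (RingHom.ker (Algebra.TensorProduct.lmul' ℂ : R ⊗[ℂ] R →ₐ[ℂ] R)) ^ (m + 1) := by
  classical
  simp only [Algebra.TensorProduct.includeLeft_apply, Algebra.TensorProduct.includeRight_apply]
  rcases Nat.eq_zero_or_pos m with hm | hm
  · subst hm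
    have hempty : Finset.univ.filter
        (fun J : Fin n → Fin (0 + 1) => 1 ≤ ∑ i, (J i : ℕ) ∧ ∑ i, (J i : ℕ) ≤ 0) = ∅ := by
      rw [Finset.filter_eq_empty_iff]
      intro J _
      omega
    rw [hempty, Finset.sum_empty, sub_zero, pow_one]
    have : (Algebra.TensorProduct.lmul' ℂ : R ⊗[ℂ] R →ₐ[ℂ] R)
        ((g ⊗ₜ[ℂ] 1 : R ⊗[ℂ] R) - 1 ⊗ₜ[ℂ] g) = 0 := by
      simp only [map_sub]
      rw [Algebra.TensorProduct.lmul'_apply_tmul, Algebra.TensorProduct.lmul'_apply_tmul]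
      ring
    exact this
  · set T : Fin n → R ⊗[ℂ] R := fun i => z i ⊗ₜ[ℂ] 1 - 1 ⊗ₜ[ℂ] z i with hT
    set I : Ideal (R ⊗[ℂ] R) :=
      RingHom.ker (Algebra.TensorProduct.lmul' ℂ : R ⊗[ℂ] R →ₐ[ℂ] R) with hI
    have hTI : ∀ i, T i ∈ I := by
      intro i
      have : (Algebra.TensorProduct.lmul' ℂ : R ⊗[ℂ] R →ₐ[ℂ] R) (T i) = 0 := by
        rw [hT]
        simp only [map_sub]
        rw [Algebra.TensorProduct.lmul'_apply_tmul, Algebra.TensorProduct.lmul'_apply_tmul]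
        ring
      exact this
    have key := taylor_key n R z hz D hD m hm g
    have box := Phi_box m n D T g
    set term : (Fin n → Fin (m+1)) → R ⊗[ℂ] R := fun J =>
      (((∏ i, Nat.factorial (J i) : ℕ) : ℂ))⁻¹ •
        ((1 ⊗ₜ[ℂ] multiDeriv D (fun i => (J i : ℕ)) g) * ∏ i, T i ^ (J i : ℕ)) with hterm
    set cond : (Fin n → Fin (m+1)) → Prop := fun J => 1 ≤ ∑ i, (J i : ℕ) ∧ ∑ i, (J i : ℕ) ≤ m
      with hcond
    have hsplit1 : ∑ J : Fin n → Fin (m+1), term J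
        = (∑ J ∈ Finset.univ.filter cond, term J)
          + ∑ J ∈ Finset.univ.filter (fun J => ¬ cond J), term J :=
      (Finset.sum_filter_add_sum_filter_not _ _ _).symm
    have hsplit2 : ∑ J ∈ Finset.univ.filter (fun J => ¬ cond J), term J
        = (∑ J ∈ (Finset.univ.filter (fun J => ¬ cond J)).filter
            (fun J => ∑ i, (J i : ℕ) = 0), term J)
          + ∑ J ∈ (Finset.univ.filter (fun J => ¬ cond J)).filter
            (fun J => ¬ ∑ i, (J i : ℕ) = 0), term J :=
      (Finset.sum_filter_add_sum_filter_not _ _ _).symm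
    have hsingle : (Finset.univ.filter (fun J => ¬ cond J)).filter
        (fun J => ∑ i, (J i : ℕ) = 0) = {(fun _ => 0 : Fin n → Fin (m+1))} := by
      ext J
      simp only [Finset.mem_filter, Finset.mem_univ, true_and, Finset.mem_singleton, hcond]
      constructor
      · rintro ⟨-, hq⟩
        funext i
        have h1 := Finset.sum_eq_zero_iff.mp hq i (Finset.mem_univ i)
        have h0 : ((0 : Fin (m+1)) : ℕ) = 0 := rfl
        exact Fin.ext (by omega)
      · rintro rfl
        exact ⟨by simp, by simp⟩
    have hterm0 : term (fun _ => 0) = 1 ⊗ₜ[ℂ] g := by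
      rw [hterm]
      simp only [Fin.val_zero, pow_zero, Finset.prod_const_one, mul_one, Nat.factorial_zero,
        Nat.cast_one, inv_one, one_smul]
      rw [show (fun i : Fin n => (0:ℕ)) = (fun _ => 0) from rfl, multiDeriv_zero]
      rfl
    have hbadmem : ∀ J ∈ (Finset.univ.filter (fun J => ¬ cond J)).filter
        (fun J => ¬ ∑ i, (J i : ℕ) = 0), term J ∈ I ^ (m+1) := by
      intro J hJ
      simp only [Finset.mem_filter, Finset.mem_univ, true_and, hcond] at hJ
      have hge : m + 1 ≤ ∑ i, (J i : ℕ) := by omega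
      refine smul_mem_ideal _ (Ideal.mul_mem_left _ _ ?_)
      exact Ideal.pow_le_pow_right hge
        (prod_pow_mem_pow I Finset.univ T (fun i _ => hTI i) (fun i => (J i : ℕ)))
    have hmain : (g ⊗ₜ[ℂ] 1 : R ⊗[ℂ] R) - 1 ⊗ₜ[ℂ] g - ∑ J ∈ Finset.univ.filter cond, term J
        = ((g ⊗ₜ[ℂ] 1 : R ⊗[ℂ] R) - Phi m n D T g)
          + ∑ J ∈ (Finset.univ.filter (fun J => ¬ cond J)).filter
            (fun J => ¬ ∑ i, (J i : ℕ) = 0), term J := by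
      rw [box, hsplit1, hsplit2, hsingle, Finset.sum_singleton, hterm0]
      ring
    rw [show (∑ J ∈ Finset.univ.filter
          (fun J : Fin n → Fin (m + 1) => 1 ≤ ∑ i, (J i : ℕ) ∧ ∑ i, (J i : ℕ) ≤ m),
          (((∏ i, Nat.factorial (J i) : ℕ) : ℂ))⁻¹ •
            ((1 ⊗ₜ[ℂ] multiDeriv D (fun i => (J i : ℕ)) g) *
              ∏ i, ((z i ⊗ₜ[ℂ] 1 : R ⊗[ℂ] R) - 1 ⊗ₜ[ℂ] z i) ^ (J i : ℕ)))
        = ∑ J ∈ Finset.univ.filter cond, term J from rfl]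
    rw [hmain]
    exact add_mem key (Ideal.sum_mem _ hbadmem)
end
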